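/- Define g_a(b) := b² ∫_ℝ (1/(exp(2a·y)+1))² φ(y−b) dy for a, b ∈ ℝ. Then for every c with 0 < c < τ*, one has g_c(τ*) > g_{τ*}(τ*): the worst-case point τ* yields strictly larger mean square regret under the logistic rule with coefficient c than under the logistic rule with coefficient τ*. -/

import Mathlib

/-!
Pair the integrand at `y` and `-y`. Since `φ(-y - b) = e^{-2by} φ(y - b)`, the paired integrand of
`g_a(b)` is `φ(y - b) · h(e^{2ay})` with `h(E) = (1 + E² e^{-2by}) / (E + 1)²`, and
`h(E) - h(e^{2by}) = (E - e^{2by})² / (e^{2by} (E + 1)² (e^{2by} + 1)) ≥ 0`.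
So `a = b` minimises the integrand of `g_a(b)` pointwise, strictly for `y ≠ 0` once `a ≠ b`.
-/

open Real MeasureTheory

/-- The standard normal density. -/
noncomputable def gaussPdf (x : ℝ) : ℝ :=
  (Real.sqrt (2 * Real.pi))⁻¹ * Real.exp (-(x ^ 2) / 2)

/-- ρ(a) = ∫ (1/(exp(2ay)+1))² φ(y−a) dy. -/
noncomputable def ρ (a : ℝ) : ℝ :=
  ∫ y : ℝ, (1 / (Real.exp (2 * a * y) + 1)) ^ 2 * gaussPdf (y - a)

/-- g_a(b) = b² ∫ (1/(exp(2ay)+1))² φ(y−b) dy. -/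
noncomputable def g (a b : ℝ) : ℝ :=
  b ^ 2 * ∫ y : ℝ, (1 / (Real.exp (2 * a * y) + 1)) ^ 2 * gaussPdf (y - b)

open ProbabilityTheory

lemma gaussPdf_eq_gaussianPDFReal : gaussPdf = gaussianPDFReal 0 1 := by
  ext x
  simp [gaussPdf, gaussianPDFReal]

lemma gaussPdf_pos (x : ℝ) : 0 < gaussPdf x := by
  unfold gaussPdf; positivity

lemma continuous_gaussPdf : Continuous gaussPdf := by
  unfold gaussPdf; fun_prop

lemma gaussPdf_neg_sub (y b : ℝ) :
    gaussPdf (-y - b) = (exp (2 * b * y))⁻¹ * gaussPdf (y - b) := by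
  rw [gaussPdf, gaussPdf, ← exp_neg, mul_left_comm, ← exp_add]
  ring_nf

noncomputable def gIntegrand (a b y : ℝ) : ℝ :=
  (1 / (exp (2 * a * y) + 1)) ^ 2 * gaussPdf (y - b)

lemma continuous_gIntegrand (a b : ℝ) : Continuous (gIntegrand a b) := by
  have hden : ∀ y : ℝ, exp (2 * a * y) + 1 ≠ 0 := fun y => by positivity
  unfold gIntegrand
  exact ((continuous_const.div (by fun_prop) hden).pow 2).mul
    (continuous_gaussPdf.comp (continuous_sub_right b))

lemma integrable_gIntegrand (a b : ℝ) : Integrable (gIntegrand a b) := by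
  have hφ : Integrable fun y => gaussPdf (y - b) := by
    rw [gaussPdf_eq_gaussianPDFReal]
    exact (integrable_gaussianPDFReal 0 1).comp_sub_right b
  refine hφ.mono (continuous_gIntegrand a b).aestronglyMeasurable (ae_of_all _ fun y => ?_)
  have hw : (1 / (exp (2 * a * y) + 1)) ^ 2 ≤ 1 :=
    pow_le_one₀ (by positivity) ((div_le_one (by positivity)).2 (by linarith [exp_pos (2 * a * y)]))
  rw [gIntegrand, norm_mul, norm_of_nonneg (by positivity : (0 : ℝ) ≤ _)]
  exact mul_le_of_le_one_left (norm_nonneg _) hw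

noncomputable def pairWeight (B E : ℝ) : ℝ :=
  (1 + E ^ 2 / B) / (E + 1) ^ 2

lemma pairWeight_sub_pairWeight_self {B E : ℝ} (hB : 0 < B) (hE : 0 < E) :
    pairWeight B E - pairWeight B B = (E - B) ^ 2 / (B * (E + 1) ^ 2 * (B + 1)) := by
  unfold pairWeight
  field_simp
  ring

lemma gIntegrand_add_neg (a b y : ℝ) :
    gIntegrand a b y + gIntegrand a b (-y) =
      gaussPdf (y - b) * pairWeight (exp (2 * b * y)) (exp (2 * a * y)) := by
  have hE := exp_pos (2 * a * y)
  have hB := exp_pos (2 * b * y)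
  rw [gIntegrand, gIntegrand, pairWeight, gaussPdf_neg_sub, show 2 * a * -y = -(2 * a * y) by ring,
    exp_neg]
  field_simp
  ring

lemma integral_gIntegrand_self_lt {a b : ℝ} (hab : a ≠ b) :
    ∫ y, gIntegrand b b y < ∫ y, gIntegrand a b y := by
  set F : ℝ → ℝ → ℝ := fun c y => gIntegrand c b y + gIntegrand c b (-y)
  have hF_int : ∀ c, Integrable (F c) := fun c =>
    (integrable_gIntegrand c b).add (integrable_gIntegrand c b).comp_neg
  have hF_integral : ∀ c, ∫ y, F c y = 2 * ∫ y, gIntegrand c b y := fun c => by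
    rw [integral_add (integrable_gIntegrand c b) (integrable_gIntegrand c b).comp_neg,
      integral_neg_eq_self (gIntegrand c b)]
    ring
  have hF_sub : ∀ y, F a y - F b y = gaussPdf (y - b) *
      ((exp (2 * a * y) - exp (2 * b * y)) ^ 2 /
        (exp (2 * b * y) * (exp (2 * a * y) + 1) ^ 2 * (exp (2 * b * y) + 1))) := fun y => by
    simp only [F, gIntegrand_add_neg, ← mul_sub,
      pairWeight_sub_pairWeight_self (exp_pos (2 * b * y)) (exp_pos (2 * a * y))]
  have hF_sub_nonneg : ∀ y, 0 ≤ F a y - F b y := fun y => by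
    rw [hF_sub]
    exact mul_nonneg (gaussPdf_pos _).le (by positivity)
  have hF_cont : ∀ c, Continuous (F c) := fun c =>
    (continuous_gIntegrand c b).add ((continuous_gIntegrand c b).comp continuous_neg)
  have hpos : 0 < ∫ y, (F a y - F b y) := by
    refine integral_pos_of_integrable_nonneg_nonzero (x := 1) ((hF_cont a).sub (hF_cont b))
      ((hF_int a).sub (hF_int b)) hF_sub_nonneg ?_
    have hne : exp (2 * a * 1) - exp (2 * b * 1) ≠ 0 :=
      sub_ne_zero.2 fun h => hab (by simpa using exp_injective h)
    rw [hF_sub]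
    exact mul_ne_zero (gaussPdf_pos _).ne' (div_ne_zero (pow_ne_zero 2 hne) (by positivity))
  rw [integral_sub (hF_int a) (hF_int b), hF_integral, hF_integral] at hpos
  linarith

theorem stmt_17_general (τstar : ℝ) :
    ∀ c : ℝ, 0 < c → c < τstar → g τstar τstar < g c τstar := by
  intro c hc hcτ
  exact mul_lt_mul_of_pos_left (integral_gIntegrand_self_lt hcτ.ne) (pow_pos (hc.trans hcτ) 2)

/-- For every 0 < c < τ*, g_c(τ*) > g_{τ*}(τ*). -/
theorem stmt_17 (τstar : ℝ) (hτ0 : 0 ≤ τstar)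
    (hτmax : ∀ τ : ℝ, 0 ≤ τ → τ ^ 2 * ρ τ ≤ τstar ^ 2 * ρ τstar) :
    ∀ c : ℝ, 0 < c → c < τstar → g τstar τstar < g c τstar :=
  stmt_17_general τstar
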